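/- Let n be an odd prime and c ∈ ZMod n nonzero. For the d-dimensional Heisenberg group representation, the operator ρ_c(e_i) = I^{⊗(i−1)} ⊗ S ⊗ I^{⊗(d−i)} and ρ_c(f_i) = I^{⊗(i−1)} ⊗ R^c ⊗ I^{⊗(d−i)} on (ℂ^n)^{⊗d} satisfy: the operator norm of (1/(4d)) ∑_{i=1}^d (ρ_c(e_i) + ρ_c(e_i)* + ρ_c(f_i) + ρ_c(f_i)*) equals the operator norm of (1/4)(S + S* + R^c + R^{−c}). -/

import Mathlib

open Matrix

/-- `ω n = e^{2πi/n}`. -/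
noncomputable def omg (n : ℕ) : ℂ := Complex.exp (2 * Real.pi * Complex.I / n)

/-- The cyclic shift matrix: `S_{i,j} = 1` iff `i + 1 = j` in `ZMod n`. -/
noncomputable def Smat (n : ℕ) : Matrix (ZMod n) (ZMod n) ℂ :=
  Matrix.of fun i j => if i + 1 = j then 1 else 0

/-- The diagonal matrix `R` with `R_{j,j} = ω^j`. -/
noncomputable def Rmat (n : ℕ) : Matrix (ZMod n) (ZMod n) ℂ :=
  Matrix.diagonal fun j => omg n ^ (j.val)

/-- The operator `I ⊗ ⋯ ⊗ M ⊗ ⋯ ⊗ I` (with `M` in slot `i`), as a matrix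
indexed by `Fin d → ZMod n` (a model of `(ℂ^n)^{⊗ d}`). -/
noncomputable def slot (n d : ℕ) (M : Matrix (ZMod n) (ZMod n) ℂ) (i : Fin d) :
    Matrix (Fin d → ZMod n) (Fin d → ZMod n) ℂ :=
  Matrix.of fun x y => ∏ j, if j = i then M (x j) (y j) else if x j = y j then 1 else 0

/-- The ℓ²-operator norm of a matrix. -/
noncomputable def opNormM {ι : Type*} [Fintype ι] [DecidableEq ι]
    (M : Matrix ι ι ℂ) : ℝ :=
  ‖Matrix.toEuclideanCLM (𝕜 := ℂ) M‖

/-! Each slot operator is the ampliation `M ↦ M ⊗ I` of `M` read through a reindexing; this is a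
star-algebra homomorphism between C⋆-algebras, hence contractive, so `‖∑ᵢ slot M i‖ ≤ d ‖M‖`.
Conversely, `M = S + S* + R^c + R^{-c}` is self-adjoint, so its spectral radius is `‖M‖` and it
has an eigenvalue `μ` with `‖μ‖ = ‖M‖`; for an eigenvector `v`, the product vector
`x ↦ ∏ⱼ v (x j)` is an eigenvector of every slot operator with eigenvalue `μ`, hence of their sum
with eigenvalue `d μ`. -/

open scoped Matrix.Norms.L2Operator Kronecker

namespace Matrix

section Spectrum

variable {K ι : Type*} [Field K] [Fintype ι] [DecidableEq ι]

theorem mem_spectrum_iff_exists_mulVec_eq_smul {A : Matrix ι ι K} {μ : K} :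
    μ ∈ spectrum K A ↔ ∃ v ≠ 0, A *ᵥ v = μ • v := by
  rw [← spectrum_toLin', ← Module.End.hasEigenvalue_iff_mem_spectrum]
  refine ⟨fun h => ?_, fun ⟨v, hv, hAv⟩ => ?_⟩
  · obtain ⟨v, hv⟩ := h.exists_hasEigenvector
    exact ⟨v, hv.2, by simpa [toLin'_apply] using Module.End.mem_eigenspace_iff.mp hv.1⟩
  · exact Module.End.hasEigenvalue_of_hasEigenvector
      ⟨Module.End.mem_eigenspace_iff.mpr (by simpa [toLin'_apply] using hAv), hv⟩

theorem exists_norm_eq_and_mulVec_eq_smul [Nonempty ι] (A : Matrix ι ι ℂ) [IsStarNormal A] :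
    ∃ μ : ℂ, ‖μ‖ = ‖A‖ ∧ ∃ v ≠ 0, A *ᵥ v = μ • v := by
  obtain ⟨μ, hμ, hμA⟩ := spectrum.exists_nnnorm_eq_spectralRadius A
  rw [IsStarNormal.spectralRadius_eq_nnnorm, ENNReal.coe_inj] at hμA
  exact ⟨μ, congrArg NNReal.toReal hμA, mem_spectrum_iff_exists_mulVec_eq_smul.mp hμ⟩

theorem norm_le_of_mulVec_eq_smul [Nonempty ι] {A : Matrix ι ι ℂ} {μ : ℂ} {v : ι → ℂ}
    (hv : v ≠ 0) (hAv : A *ᵥ v = μ • v) : ‖μ‖ ≤ ‖A‖ :=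
  spectrum.norm_le_norm_of_mem (mem_spectrum_iff_exists_mulVec_eq_smul.mpr ⟨v, hv, hAv⟩)

end Spectrum

section Ampliation

variable {ι κ ρ R : Type*} [Fintype ι] [DecidableEq ι] [Fintype κ] [DecidableEq κ]
  [Fintype ρ] [DecidableEq ρ] [CommSemiring R] [StarRing R]

def ampliation (e : κ ≃ ι × ρ) : Matrix ι ι R →⋆ₐ[R] Matrix κ κ R where
  toFun M := (M ⊗ₖ (1 : Matrix ρ ρ R)).submatrix e e
  map_one' := by simp
  map_mul' A B := by rw [submatrix_mul_equiv, ← mul_kronecker_mul, mul_one]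
  map_zero' := by simp
  map_add' A B := by rw [add_kronecker]; rfl
  commutes' r := by
    simp [algebraMap_eq_diagonal, ← diagonal_one, diagonal_kronecker_diagonal]
  map_star' A := by simp [star_eq_conjTranspose, conjTranspose_kronecker]

theorem ampliation_apply (e : κ ≃ ι × ρ) (M : Matrix ι ι R) (x y : κ) :
    ampliation e M x y = M (e x).1 (e y).1 * (1 : Matrix ρ ρ R) (e x).2 (e y).2 := rfl

theorem norm_ampliation_le (e : κ ≃ ι × ρ) (M : Matrix ι ι ℂ) : ‖ampliation e M‖ ≤ ‖M‖ :=
  NonUnitalStarAlgHom.norm_apply_le (ampliation e) M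

end Ampliation

end Matrix

section Slot

open Matrix

variable {n d : ℕ} [NeZero n]

theorem slot_eq_ampliation (M : Matrix (ZMod n) (ZMod n) ℂ) (i : Fin d) :
    slot n d M i = ampliation (Equiv.funSplitAt i (ZMod n)) M := by
  ext x y
  rw [ampliation_apply, slot, of_apply, Fintype.prod_eq_mul_prod_subtype_ne _ i, if_pos rfl]
  simp only [Equiv.funSplitAt_apply, one_apply, funext_iff]
  rw [← Fintype.prod_boole]
  exact congrArg _ (Finset.prod_congr rfl fun j _ => if_neg j.2)

theorem slot_mulVec_prod (M : Matrix (ZMod n) (ZMod n) ℂ) (i : Fin d) (v : ZMod n → ℂ) :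
    slot n d M i *ᵥ (fun x => ∏ j, v (x j)) =
      fun x => ∏ j, if j = i then (M *ᵥ v) (x j) else v (x j) := by
  ext x
  simp only [mulVec, dotProduct, slot, of_apply, ← Finset.prod_mul_distrib]
  rw [← Fintype.prod_sum fun j b =>
    (if j = i then M (x j) b else if x j = b then 1 else 0) * v b]
  refine Finset.prod_congr rfl fun j _ => ?_
  split_ifs
  · rfl
  · simp

theorem slot_mulVec_prod_of_mulVec_eq_smul {M : Matrix (ZMod n) (ZMod n) ℂ} {μ : ℂ}
    {v : ZMod n → ℂ} (hMv : M *ᵥ v = μ • v) (i : Fin d) :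
    slot n d M i *ᵥ (fun x => ∏ j, v (x j)) = μ • fun x => ∏ j, v (x j) := by
  ext x
  rw [slot_mulVec_prod, hMv, Pi.smul_apply]
  dsimp only
  rw [Fintype.prod_eq_mul_prod_subtype_ne _ i, Fintype.prod_eq_mul_prod_subtype_ne _ i, if_pos rfl,
    Pi.smul_apply, smul_eq_mul, smul_eq_mul, mul_assoc]
  exact congrArg _ (congrArg _ (Finset.prod_congr rfl fun j _ => if_neg j.2))

theorem norm_sum_slot (M : Matrix (ZMod n) (ZMod n) ℂ) [IsStarNormal M] :
    ‖∑ i : Fin d, slot n d M i‖ = d * ‖M‖ := by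
  refine le_antisymm ?_ ?_
  · calc ‖∑ i : Fin d, slot n d M i‖ ≤ ∑ i : Fin d, ‖slot n d M i‖ := norm_sum_le _ _
      _ ≤ ∑ _i : Fin d, ‖M‖ := Finset.sum_le_sum fun i _ => by
          rw [slot_eq_ampliation]; exact norm_ampliation_le _ M
      _ = d * ‖M‖ := by simp
  · obtain ⟨μ, hμ, v, hv, hMv⟩ := exists_norm_eq_and_mulVec_eq_smul M
    obtain ⟨a, ha⟩ := Function.ne_iff.mp hv
    have hV : (fun x : Fin d → ZMod n => ∏ j, v (x j)) ≠ 0 :=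
      Function.ne_iff.mpr ⟨fun _ => a, Finset.prod_ne_zero_iff.mpr fun _ _ => ha⟩
    have hsum : (∑ i : Fin d, slot n d M i) *ᵥ (fun x => ∏ j, v (x j)) =
        ((d : ℂ) * μ) • fun x => ∏ j, v (x j) := by
      simp only [sum_mulVec, slot_mulVec_prod_of_mulVec_eq_smul hMv]
      rw [Finset.sum_const, Finset.card_univ, Fintype.card_fin, ← Nat.cast_smul_eq_nsmul ℂ,
        smul_smul]
    simpa [hμ] using norm_le_of_mulVec_eq_smul hV hsum

end Slot

theorem stmt18_general (n : ℕ) [NeZero n] (c : ZMod n) (d : ℕ) (hd : 0 < d) :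
    opNormM ((1 / (4 * d : ℂ)) • ∑ i : Fin d,
        (slot n d (Smat n) i + (slot n d (Smat n) i)ᴴ +
          slot n d (Rmat n ^ c.val) i + (slot n d (Rmat n ^ c.val) i)ᴴ)) =
      opNormM ((1 / 4 : ℂ) •
        (Smat n + (Smat n)ᴴ + Rmat n ^ c.val + (Rmat n ^ c.val)ᴴ)) := by
  set M := Smat n + (Smat n)ᴴ + Rmat n ^ c.val + (Rmat n ^ c.val)ᴴ
  have hM : IsSelfAdjoint M := by
    simp only [IsSelfAdjoint, M, star_add, star_eq_conjTranspose, conjTranspose_conjTranspose]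
    abel
  have : IsStarNormal M := hM.isStarNormal
  have hslot (i : Fin d) : slot n d (Smat n) i + (slot n d (Smat n) i)ᴴ +
      slot n d (Rmat n ^ c.val) i + (slot n d (Rmat n ^ c.val) i)ᴴ = slot n d M i := by
    simp only [slot_eq_ampliation, ← Matrix.star_eq_conjTranspose, ← map_star, ← map_add, M]
  simp only [opNormM, ← Matrix.cstar_norm_def, hslot, norm_smul, norm_sum_slot]
  have hd' : (d : ℝ) ≠ 0 := by positivity
  simp only [norm_div, norm_one, norm_mul, Complex.norm_natCast, Complex.norm_ofNat]
  field_simp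

theorem stmt18 (n : ℕ) [NeZero n] [Fact (Nat.Prime n)] (hodd : Odd n)
    (c : ZMod n) (hc : c ≠ 0) (d : ℕ) (hd : 0 < d) :
    opNormM ((1 / (4 * d : ℂ)) • ∑ i : Fin d,
        (slot n d (Smat n) i + (slot n d (Smat n) i)ᴴ +
          slot n d (Rmat n ^ c.val) i + (slot n d (Rmat n ^ c.val) i)ᴴ)) =
      opNormM ((1 / 4 : ℂ) •
        (Smat n + (Smat n)ᴴ + Rmat n ^ c.val + (Rmat n ^ c.val)ᴴ)) :=
  stmt18_general n c d hd
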